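/- arXiv:1104.3900 — 2 statements merged into one kernel-verified Lean document; each statement's English description precedes it below -/
import Mathlib

section
/- Let n ≥ 3 and let a ∈ ℤ^n satisfy F_n(a) = 0. Then for any two pairs of distinct indices {i,j} and {i',j'}, the integers 2·s_{ij}(a) + 1 and 2·s_{i'j'}(a) + 1 have the same sign, where s_{ij}(a) = Σ_{l ≠ i,j} a_l. In particular, for n = 3, the coordinates of any integer solution of F_3 = 0 are either all non-negative or all negative. -/
open Finset

def F {n : ℕ} (x : Fin n → ℤ) : ℤ :=
  (∑ i, x i) ^ 2 - (∑ i, x i) - 4 * ∑ i, ∑ j, if i < j then x i * x j else 0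

/-!
Expanding `(∑ a)²` turns `F a = 0` into `2 ∑ aₗ² = s² + s` with `s = ∑ aₗ`. For `i ≠ j` put
`t = aᵢ + aⱼ` and `u = s - t = s_{ij}`. Then `(2s + 1)² = 8 ∑ aₗ² + 1 ≥ 8 (aᵢ² + aⱼ²) + 1 ≥ (2t)² + 1`,
and `2 (2s + 1)(2u + 1) = (2s + 1)² - (2t)² + (2u + 1)²` is positive. So every `2 s_{ij} + 1`
has the sign of `2s + 1`. For `n = 3`, `s_{ij}` is the remaining coordinate.
-/

theorem sq_sum_eq_sum_sq_add_two_mul_sum_lt {ι R : Type*} [Fintype ι] [LinearOrder ι]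
    [CommRing R] (x : ι → R) :
    (∑ i, x i) ^ 2 = ∑ i, x i ^ 2 + 2 * ∑ i, ∑ j, if i < j then x i * x j else 0 := by
  have hsplit (i j : ι) : x i * x j = (if i < j then x i * x j else 0)
      + (if j < i then x j * x i else 0) + if i = j then x i ^ 2 else 0 := by
    rcases lt_trichotomy i j with h | rfl | h
    · simp [h, h.not_gt, h.ne]
    · simp [sq]
    · simp [h, h.not_gt, h.ne', mul_comm]
  rw [sq, sum_mul_sum, sum_congr rfl fun i _ => sum_congr rfl fun j _ => hsplit i j]
  simp only [sum_add_distrib, sum_ite_eq, mem_univ, if_true]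
  rw [sum_comm (f := fun i j => if j < i then x j * x i else 0)]
  ring

theorem F_eq_zero_iff {n : ℕ} (a : Fin n → ℤ) :
    F a = 0 ↔ 2 * ∑ l, a l ^ 2 = (∑ l, a l) ^ 2 + ∑ l, a l := by
  have := sq_sum_eq_sum_sq_add_two_mul_sum_lt a
  unfold F
  constructor <;> intro h <;> linarith

theorem mul_pos_of_two_mul_sum_sq_eq {ι R : Type*} [Fintype ι] [DecidableEq ι] [CommRing R]
    [LinearOrder R] [IsStrictOrderedRing R] {a : ι → R}
    (ha : 2 * ∑ l, a l ^ 2 = (∑ l, a l) ^ 2 + ∑ l, a l) {i j : ι} (hij : i ≠ j) :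
    0 < (2 * ∑ l, a l + 1) * (2 * ∑ l ∈ univ \ {i, j}, a l + 1) := by
  have hpair : a i ^ 2 + a j ^ 2 ≤ ∑ l, a l ^ 2 := by
    simpa only [sum_pair hij] using
      sum_le_univ_sum_of_nonneg (s := {i, j}) fun l => sq_nonneg (a l)
  rw [sum_sdiff_eq_sub (subset_univ _), sum_pair hij]
  set s := ∑ l, a l
  set u := s - (a i + a j)
  have hsq : (2 * (a i + a j)) ^ 2 < (2 * s + 1) ^ 2 := by
    linarith [sq_nonneg (a i - a j)]
  have hexpand : 2 * ((2 * s + 1) * (2 * u + 1))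
      = (2 * s + 1) ^ 2 - (2 * (a i + a j)) ^ 2 + (2 * u + 1) ^ 2 := by ring
  linarith [sq_nonneg (2 * u + 1)]

theorem pos_two_mul_sum_sdiff_pair_add_one_iff {n : ℕ} {a : Fin n → ℤ} (ha : F a = 0)
    {i j : Fin n} (hij : i ≠ j) :
    0 < 2 * ∑ l ∈ univ \ {i, j}, a l + 1 ↔ 0 < 2 * ∑ l, a l + 1 := by
  rcases pos_and_pos_or_neg_and_neg_of_mul_pos
    (mul_pos_of_two_mul_sum_sq_eq ((F_eq_zero_iff a).1 ha) hij) with ⟨h, h'⟩ | ⟨h, h'⟩ <;> omega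

/-- For a solution `a` of `F_n = 0` (`n ≥ 3`), all the numbers `2·s_{ij}(a) + 1`
(sum over coordinates omitting `i` and `j`) have the same sign; in particular the
coordinates of a solution of `F_3 = 0` are either all non-negative or all negative. -/
theorem stmt_4 :
    (∀ n : ℕ, 3 ≤ n → ∀ a : Fin n → ℤ, F a = 0 →
      ∀ i j i' j' : Fin n, i ≠ j → i' ≠ j' →
        (0 < 2 * (∑ l ∈ univ \ {i, j}, a l) + 1 ↔
         0 < 2 * (∑ l ∈ univ \ {i', j'}, a l) + 1)) ∧
    (∀ x : Fin 3 → ℤ, F x = 0 → (∀ i, 0 ≤ x i) ∨ (∀ i, x i < 0)) := by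
  refine ⟨fun n _ a ha i j i' j' hij hij' => ?_, fun x hx => ?_⟩
  · rw [pos_two_mul_sum_sdiff_pair_add_one_iff ha hij,
      pos_two_mul_sum_sdiff_pair_add_one_iff ha hij']
  · have hcoord (i : Fin 3) : 0 < 2 * x i + 1 ↔ 0 < 2 * ∑ l, x l + 1 := by
      have hcompl : univ \ {i + 1, i + 2} = {i} := by revert i; decide
      have hne : i + 1 ≠ i + 2 := by revert i; decide
      simpa only [hcompl, sum_singleton] using pos_two_mul_sum_sdiff_pair_add_one_iff hx hne
    by_cases hs : 0 < 2 * ∑ l, x l + 1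
    · exact Or.inl fun i => by have := (hcoord i).2 hs; omega
    · exact Or.inr fun i => by have := mt (hcoord i).1 hs; omega
end

section
/- For a natural number c, the following are equivalent: (1) c is a coordinate of some 3-color fair game (i.e., c ∈ C_3); (2) 9 does not divide 2c+1 and every prime factor of 2c+1 other than 3 is congruent to 1 mod 3. (Equivalently, 2c+1 belongs to P_1^{≥0} ∪ 3·P_1^{≥0}, where P_1^{≥0} is the set of natural numbers all of whose prime factors are congruent to 1 mod 3.) -/
open Finset

/-- `C3` is the set of natural numbers occurring as a coordinate of some 3-color
fair game. -/
def C3 : Set ℕ :=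
  {c : ℕ | ∃ x : Fin 3 → ℤ, F x = 0 ∧ (∀ i, 0 ≤ x i) ∧ ∃ i, x i = (c : ℤ)}

/-!
With `k = a + b - d` one has `F (a, b, d) = k² + k + 1 - (2a + 1)(2b + 1)`, so a coordinate `c`
of a fair game makes `2c + 1` divide a value `k² + k + 1`. Conversely, if `k ∈ ℕ` and
`k² + k + 1 = (2c + 1)(2b + 1)`, then `k ≤ b + c` and `(c, b, b + c - k)` is a fair game.
Thus `c ∈ C₃` iff `X² + X + 1` has a root modulo `2c + 1`. By the Chinese remainder theorem
this is a question about prime powers: modulo a prime `p ≠ 3` a root is a primitive cube root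
of unity, which exists iff `3 ∣ p - 1`, and it lifts to every `p ^ k` by Hensel's lemma since
the derivative `2ω + 1` squares to `-3`; modulo `3` the root is `1`, modulo `9` there is none.
-/

open Polynomial

theorem exists_sq_add_self_add_one_eq_zero_of_ringHom {R S : Type*} [CommRing R] [CommRing S]
    (f : R →+* S) (h : ∃ ω : R, ω ^ 2 + ω + 1 = 0) : ∃ ω : S, ω ^ 2 + ω + 1 = 0 := by
  obtain ⟨ω, hω⟩ := h
  exact ⟨f ω, by rw [← map_zero f, ← hω, map_add, map_add, map_pow, map_one]⟩

theorem PadicInt.norm_lt_one_iff_toZMod_eq_zero {p : ℕ} [Fact p.Prime] (x : ℤ_[p]) :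
    ‖x‖ < 1 ↔ toZMod x = 0 := by
  rw [← RingHom.mem_ker, ker_toZMod, IsLocalRing.mem_maximalIdeal, mem_nonunits]

namespace ZMod

theorem exists_sq_add_self_add_one_eq_zero_of_dvd {m n : ℕ} (hmn : m ∣ n)
    (h : ∃ ω : ZMod n, ω ^ 2 + ω + 1 = 0) : ∃ ω : ZMod m, ω ^ 2 + ω + 1 = 0 :=
  exists_sq_add_self_add_one_eq_zero_of_ringHom (castHom hmn _) h

theorem exists_sq_add_self_add_one_eq_zero_mul {m n : ℕ} (hmn : m.Coprime n)
    (hm : ∃ ω : ZMod m, ω ^ 2 + ω + 1 = 0) (hn : ∃ ω : ZMod n, ω ^ 2 + ω + 1 = 0) :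
    ∃ ω : ZMod (m * n), ω ^ 2 + ω + 1 = 0 := by
  obtain ⟨ω₁, h₁⟩ := hm
  obtain ⟨ω₂, h₂⟩ := hn
  exact exists_sq_add_self_add_one_eq_zero_of_ringHom (chineseRemainder hmn).symm.toRingHom
    ⟨(ω₁, ω₂), Prod.ext h₁ h₂⟩

theorem not_exists_sq_add_self_add_one_eq_zero_nine : ¬ ∃ ω : ZMod 9, ω ^ 2 + ω + 1 = 0 := by
  decide

theorem three_ne_zero_of_prime {p : ℕ} [Fact p.Prime] (hp3 : p ≠ 3) : (3 : ZMod p) ≠ 0 := by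
  have := (natCast_eq_zero_iff 3 p).not.mpr
    (by rw [Nat.prime_dvd_prime_iff_eq Fact.out Nat.prime_three]; exact hp3)
  exact_mod_cast this

theorem exists_sq_add_self_add_one_eq_zero_iff_of_prime {p : ℕ} [Fact p.Prime] (hp3 : p ≠ 3) :
    (∃ ω : ZMod p, ω ^ 2 + ω + 1 = 0) ↔ p % 3 = 1 := by
  have : NeZero ((3 : ℕ) : ZMod p) := ⟨by exact_mod_cast three_ne_zero_of_prime hp3⟩
  have hroot (ω : ZMod p) : ω ^ 2 + ω + 1 = 0 ↔ orderOf ω = 3 := by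
    rw [← IsPrimitiveRoot.iff_orderOf, ← isRoot_cyclotomic_iff, cyclotomic_three]
    simp
  have hp := (Fact.out : p.Prime).two_le
  simp only [hroot]
  constructor
  · rintro ⟨ω, hω⟩
    have hω0 : ω ≠ 0 := by rintro rfl; simp at hω
    have := hω ▸ orderOf_dvd_card_sub_one hω0
    omega
  · intro h
    obtain ⟨z, hz⟩ := exists_prime_orderOf_dvd_card (G := (ZMod p)ˣ) 3
      (by rw [card_units]; omega)
    exact ⟨z, by rwa [orderOf_units]⟩

theorem exists_sq_add_self_add_one_eq_zero_pow {p : ℕ} [Fact p.Prime] (hp3 : p ≠ 3)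
    (h : ∃ ω : ZMod p, ω ^ 2 + ω + 1 = 0) (k : ℕ) :
    ∃ ω : ZMod (p ^ k), ω ^ 2 + ω + 1 = 0 := by
  obtain ⟨ω, hω⟩ := h
  set a : ℤ_[p] := (ω.val : ℤ_[p])
  have ha : PadicInt.toZMod a = ω := by simp [a]
  have hval : ‖a ^ 2 + a + 1‖ < 1 := by
    simp [PadicInt.norm_lt_one_iff_toZMod_eq_zero, ha, hω]
  have hderiv : ‖2 * a + 1‖ = 1 := by
    refine le_antisymm (PadicInt.norm_le_one _) (not_lt.mp fun hlt => three_ne_zero_of_prime hp3 ?_)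
    rw [PadicInt.norm_lt_one_iff_toZMod_eq_zero] at hlt
    simp only [map_add, map_mul, map_ofNat, map_one, ha] at hlt
    linear_combination 4 * hω - (2 * ω + 1) * hlt
  obtain ⟨z, hz, -⟩ := hensels_lemma (F := (X ^ 2 + X + 1 : ℤ[X])) (a := a) (by
    simpa [map_ofNat, hderiv] using hval)
  exact exists_sq_add_self_add_one_eq_zero_of_ringHom (PadicInt.toZModPow k)
    ⟨z, by simpa using hz⟩

theorem exists_sq_add_self_add_one_eq_zero_of_forall_prime_dvd {n : ℕ} (h9 : ¬ 9 ∣ n)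
    (hn : ∀ p : ℕ, p.Prime → p ∣ n → p ≠ 3 → p % 3 = 1) :
    ∃ ω : ZMod n, ω ^ 2 + ω + 1 = 0 := by
  induction n using Nat.recOnPosPrimePosCoprime with
  | zero => exact absurd (dvd_zero 9) h9
  | one => exact ⟨0, Subsingleton.elim _ _⟩
  | prime_pow p k hp hk =>
    have := Fact.mk hp
    by_cases hp3 : p = 3
    · subst hp3
      obtain rfl : k = 1 := by
        by_contra hk1
        exact h9 (pow_dvd_pow 3 (by omega : 2 ≤ k))
      exact ⟨1, rfl⟩
    · refine exists_sq_add_self_add_one_eq_zero_pow hp3 ?_ k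
      exact (exists_sq_add_self_add_one_eq_zero_iff_of_prime hp3).mpr
        (hn p hp (dvd_pow_self p hk.ne') hp3)
  | coprime a b _ _ hab iha ihb =>
    exact exists_sq_add_self_add_one_eq_zero_mul hab
      (iha (fun h => h9 (h.mul_right b)) fun p hp hpa => hn p hp (hpa.mul_right b))
      (ihb (fun h => h9 (h.mul_left a)) fun p hp hpb => hn p hp (hpb.mul_left a))

theorem exists_sq_add_self_add_one_eq_zero_iff (n : ℕ) :
    (∃ ω : ZMod n, ω ^ 2 + ω + 1 = 0) ↔
      ¬ 9 ∣ n ∧ ∀ p : ℕ, p.Prime → p ∣ n → p ≠ 3 → p % 3 = 1 := by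
  refine ⟨fun h => ⟨fun h9 => ?_, fun p hp hpn hp3 => ?_⟩, fun h => ?_⟩
  · exact not_exists_sq_add_self_add_one_eq_zero_nine
      (exists_sq_add_self_add_one_eq_zero_of_dvd h9 h)
  · have := Fact.mk hp
    exact (exists_sq_add_self_add_one_eq_zero_iff_of_prime hp3).mp
      (exists_sq_add_self_add_one_eq_zero_of_dvd hpn h)
  · exact exists_sq_add_self_add_one_eq_zero_of_forall_prime_dvd h.1 h.2

end ZMod

theorem F_fin_three (x : Fin 3 → ℤ) :
    F x = (x 0 + x 1 - x 2) ^ 2 + (x 0 + x 1 - x 2) + 1 - (2 * x 0 + 1) * (2 * x 1 + 1) := by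
  simp [F, Fin.sum_univ_three]
  ring

theorem exists_dvd_sq_add_self_add_one_of_F_eq_zero {x : Fin 3 → ℤ} (hx : F x = 0) (i : Fin 3) :
    ∃ k : ℤ, 2 * x i + 1 ∣ k ^ 2 + k + 1 := by
  rw [F_fin_three] at hx
  match i with
  | 0 => exact ⟨x 0 + x 1 - x 2, 2 * x 1 + 1, by linear_combination hx⟩
  | 1 => exact ⟨x 0 + x 1 - x 2, 2 * x 0 + 1, by linear_combination hx⟩
  | 2 => exact ⟨x 2 + x 0 - x 1, 2 * x 0 + 1, by linear_combination hx⟩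

theorem mem_C3_of_dvd_sq_add_self_add_one {c k : ℕ} (h : 2 * c + 1 ∣ k ^ 2 + k + 1) :
    c ∈ C3 := by
  obtain ⟨v, hv⟩ := h
  have hodd : Odd (k ^ 2 + k + 1) := by
    rw [show k ^ 2 + k + 1 = k * (k + 1) + 1 by ring]
    exact (Nat.even_mul_succ_self k).add_one
  obtain ⟨b, rfl⟩ : Odd v := (Nat.odd_mul.mp (hv ▸ hodd)).2
  -- `(c + b + 1)² - (2c + 1)(2b + 1) = (c - b)²`
  have hk : k ≤ c + b := by
    by_contra! hlt
    nlinarith [sq_nonneg ((c : ℤ) - b)]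
  refine ⟨![c, b, ↑(c + b - k)], ?_, ?_, 0, rfl⟩
  · have hv' : (k : ℤ) ^ 2 + k + 1 = (2 * c + 1) * (2 * b + 1) := by exact_mod_cast hv
    rw [F_fin_three]
    simp only [Matrix.cons_val_zero, Matrix.cons_val_one, Matrix.cons_val_two, Matrix.head_cons,
      Matrix.tail_cons]
    push_cast [hk]
    linear_combination hv'
  · intro i
    fin_cases i <;> simp

theorem mem_C3_iff (c : ℕ) : c ∈ C3 ↔ ∃ ω : ZMod (2 * c + 1), ω ^ 2 + ω + 1 = 0 := by
  constructor
  · rintro ⟨x, hx, -, i, hi⟩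
    obtain ⟨k, hk⟩ := exists_dvd_sq_add_self_add_one_of_F_eq_zero hx i
    have hdvd : ((2 * c + 1 : ℕ) : ℤ) ∣ k ^ 2 + k + 1 := by push_cast; rwa [← hi]
    exact ⟨k, by simpa using (ZMod.intCast_zmod_eq_zero_iff_dvd _ _).mpr hdvd⟩
  · rintro ⟨ω, hω⟩
    refine mem_C3_of_dvd_sq_add_self_add_one (k := ω.val) ((ZMod.natCast_eq_zero_iff _ _).mp ?_)
    push_cast
    rwa [ZMod.natCast_zmod_val]

/-- `c ∈ C_3` iff `9 ∤ 2c+1` and every prime factor of `2c+1` other than `3` is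
`≡ 1 (mod 3)`, i.e. iff `2c+1 ∈ P₁^{≥0} ∪ 3·P₁^{≥0}`. -/
theorem stmt_13 (c : ℕ) :
    c ∈ C3 ↔
      ¬ (9 ∣ (2 * c + 1)) ∧
        ∀ p : ℕ, p.Prime → p ∣ (2 * c + 1) → p ≠ 3 → p % 3 = 1 := by
  rw [mem_C3_iff, ZMod.exists_sq_add_self_add_one_eq_zero_iff]
end
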